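/- Let D ≥ 2 and n ≥ 1 be integers and let S be a subgroup of the n-qudit Pauli group P_n having a nonzero common fixed vector. Then S can be generated by at most 2n elements. -/

import Mathlib

open Matrix

/-- ω = exp(2πi/D), a primitive D-th root of unity. -/
noncomputable def omegaD (D : ℕ) : ℂ := Complex.exp (2 * Real.pi * Complex.I / D)

/-- The single-qudit Pauli operator Z = Σ_j ω^j |j⟩⟨j| on ℂ^D. -/
noncomputable def Zmat (D : ℕ) : Matrix (ZMod D) (ZMod D) ℂ :=
  Matrix.of fun j k => if k = j then omegaD D ^ j.val else 0

/-- The single-qudit Pauli operator X = Σ_j |j⟩⟨j+1| on ℂ^D (index arithmetic mod D). -/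
noncomputable def Xmat (D : ℕ) : Matrix (ZMod D) (ZMod D) ℂ :=
  Matrix.of fun j k => if k = j + 1 then (1 : ℂ) else 0

/-- The n-fold Kronecker product X^x Z^z = (X^{x_1}Z^{z_1}) ⊗ ⋯ ⊗ (X^{x_n}Z^{z_n}),
written entrywise on the index set (Fin n → ZMod D) ≃ (ZMod D)^n of size D^n. -/
noncomputable def XZ (D n : ℕ) [NeZero D] (x z : Fin n → ZMod D) :
    Matrix (Fin n → ZMod D) (Fin n → ZMod D) ℂ :=
  Matrix.of fun j k => ∏ i, (Xmat D ^ (x i).val * Zmat D ^ (z i).val) (j i) (k i)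

/-- A Pauli product ω^λ X^x Z^z on n qudits. -/
def IsPauli (D n : ℕ) [NeZero D] (M : Matrix (Fin n → ZMod D) (Fin n → ZMod D) ℂ) : Prop :=
  ∃ (lam : ZMod D) (x z : Fin n → ZMod D), M = omegaD D ^ lam.val • XZ D n x z

/-! Forgetting the phase, `ω^λ X^x Z^z ↦ (x, z)` is a homomorphism from `S` to `ℤ_D^{2n}`,
because `X^x Z^z · X^x' Z^z' = ω^{-x'·z} X^{x+x'} Z^{z+z'}`. It is injective on `S`: two
elements with the same `(x, z)` differ by a scalar, and as both fix `ψ ≠ 0` that scalar is `1`.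
So `S` is isomorphic to a subgroup of `ℤ_D^{2n}`, i.e. to the image of a subgroup of `ℤ^{2n}`,
and by the Smith normal form every subgroup of `ℤ^{2n}` is generated by `2n` elements. -/

theorem AddSubgroup.closure_range_extend_zero {α β G : Type*} [AddGroup G] {e : α → β}
    (he : Function.Injective e) (b : α → G) :
    AddSubgroup.closure (Set.range (Function.extend e b 0)) =
      AddSubgroup.closure (Set.range b) := by
  refine le_antisymm ?_ (AddSubgroup.closure_mono ?_)
  · rw [← AddSubgroup.closure_union_zero (Set.range b)]
    refine AddSubgroup.closure_mono ((Set.range_extend_subset _ _ _).trans ?_)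
    exact Set.union_subset_union_right _ (by rintro _ ⟨_, _, rfl⟩; rfl)
  · rintro _ ⟨i, rfl⟩
    exact ⟨e i, he.extend_apply _ _ _⟩

theorem AddSubgroup.exists_closure_range_eq_pi_int {ι : Type*} [Finite ι]
    (N : AddSubgroup (ι → ℤ)) :
    ∃ v : ι → ι → ℤ, AddSubgroup.closure (Set.range v) = N := by
  obtain ⟨k, snf⟩ := Submodule.smithNormalForm (Pi.basisFun ℤ ι) N.toIntSubmodule
  refine ⟨Function.extend snf.f (N.toIntSubmodule.subtype ∘ snf.bN) 0, ?_⟩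
  rw [closure_range_extend_zero snf.f.injective, ← Submodule.span_int_eq_addSubgroupClosure,
    Set.range_comp, Submodule.span_image, snf.bN.span_eq, Submodule.map_top,
    Submodule.range_subtype, AddSubgroup.toIntSubmodule_toAddSubgroup]

theorem AddSubgroup.exists_closure_range_eq_of_surjective {ι A : Type*} [Finite ι]
    [AddCommGroup A] {π : (ι → ℤ) →+ A} (hπ : Function.Surjective π) (N : AddSubgroup A) :
    ∃ v : ι → A, AddSubgroup.closure (Set.range v) = N := by
  obtain ⟨v, hv⟩ := exists_closure_range_eq_pi_int (N.comap π)
  refine ⟨π ∘ v, ?_⟩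
  rw [Set.range_comp, ← AddMonoidHom.map_closure, hv, map_comap_eq_self_of_surjective hπ]

theorem ZMod.exists_closure_range_eq {ι : Type*} [Finite ι] (D : ℕ)
    (K : Subgroup (Multiplicative (ι → ZMod D))) :
    ∃ a : ι → Multiplicative (ι → ZMod D), Subgroup.closure (Set.range a) = K := by
  obtain ⟨v, hv⟩ := AddSubgroup.exists_closure_range_eq_of_surjective
    (π := (Int.castAddHom (ZMod D)).compLeft ι) ZMod.intCast_surjective.comp_left
    K.toAddSubgroup'
  refine ⟨Multiplicative.ofAdd ∘ v, Subgroup.toAddSubgroup'.injective ?_⟩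
  rw [Subgroup.toAddSubgroup'_closure, ← hv]
  rfl

theorem Subgroup.exists_closure_range_eq_of_injective {G H ι : Type*} [Group G] [Group H]
    {S : Subgroup G} {f : S →* H} (hf : Function.Injective f)
    (hH : ∀ K : Subgroup H, ∃ a : ι → H, closure (Set.range a) = K) :
    ∃ g : ι → G, closure (Set.range g) = S := by
  obtain ⟨a, ha⟩ := hH f.range
  choose s hs using fun i => (ha ▸ subset_closure ⟨i, rfl⟩ : a i ∈ f.range)
  have hs_top : closure (Set.range s) = ⊤ := by
    apply map_injective hf
    rw [MonoidHom.map_closure, ← Set.range_comp, show ⇑f ∘ s = a from funext hs, ha,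
      MonoidHom.range_eq_map]
  refine ⟨fun i => s i, ?_⟩
  rw [Set.range_comp' Subtype.val, ← coe_subtype, ← MonoidHom.map_closure, hs_top,
    ← MonoidHom.range_eq_map, range_subtype]

theorem smul_eq_smul_of_smul_mulVec_eq {ι K : Type*} [Fintype ι] [Field K] {M : Matrix ι ι K}
    {c c' : K} {ψ : ι → K} (hψ : ψ ≠ 0) (h : (c • M) *ᵥ ψ = ψ)
    (h' : (c' • M) *ᵥ ψ = ψ) :
    c • M = c' • M := by
  rw [smul_mulVec] at h h'
  have hMψ : M *ᵥ ψ ≠ 0 := fun h0 => hψ (by rw [← h, h0, smul_zero])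
  rw [smul_left_injective K hMψ (h.trans h'.symm)]

section Pauli

variable {D : ℕ} [NeZero D]

theorem omegaD_pow_val (a : ZMod D) : omegaD D ^ a.val = ZMod.stdAddChar a := by
  rw [ZMod.stdAddChar_apply, ZMod.toCircle_apply, omegaD, ← Complex.exp_nat_mul]
  ring_nf

theorem Zmat_eq_diagonal : Zmat D = diagonal fun j => ZMod.stdAddChar j := by
  ext j k
  simp [Zmat, diagonal, omegaD_pow_val, eq_comm]

theorem Xmat_pow_apply (m : ℕ) (j k : ZMod D) :
    (Xmat D ^ m) j k = if k = j + m then 1 else 0 := by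
  induction m generalizing j with
  | zero => simp [one_apply, eq_comm]
  | succ m ih =>
    rw [pow_succ', mul_apply, Finset.sum_eq_single (j + 1)]
    · rw [ih, Xmat, of_apply, if_pos rfl, one_mul, Nat.cast_succ, add_right_comm, add_assoc]
    · intro l _ hl
      simp [Xmat, hl]
    · simp

theorem Xmat_pow_mul_Zmat_pow_apply (a b j k : ZMod D) :
    (Xmat D ^ a.val * Zmat D ^ b.val) j k =
      if k = j + a then ZMod.stdAddChar (k * b) else 0 := by
  rw [Zmat_eq_diagonal, diagonal_pow, mul_diagonal, Xmat_pow_apply, ZMod.natCast_zmod_val]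
  simp [← AddChar.map_nsmul_eq_pow, mul_comm]

theorem XZ_apply {n : ℕ} (x z j k : Fin n → ZMod D) :
    XZ D n x z j k = if k = j + x then ZMod.stdAddChar (k ⬝ᵥ z) else 0 := by
  rw [XZ, of_apply]
  simp only [Xmat_pow_mul_Zmat_pow_apply, Finset.prod_ite_zero]
  congr 1
  · simp [funext_iff]
  · exact (map_prod ZMod.stdAddChar.toMonoidHom (Multiplicative.ofAdd ∘ (k * z)) _).symm

theorem XZ_mul {n : ℕ} (x z x' z' : Fin n → ZMod D) :
    XZ D n x z * XZ D n x' z' = ZMod.stdAddChar (-(x' ⬝ᵥ z)) • XZ D n (x + x') (z + z') := by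
  ext j k
  rw [mul_apply, Finset.sum_eq_single (j + x), Matrix.smul_apply, XZ_apply, XZ_apply, XZ_apply,
    if_pos rfl]
  · by_cases h : k = j + x + x'
    · subst h
      rw [if_pos rfl, if_pos (add_assoc _ _ _), smul_eq_mul, ← AddChar.map_add_eq_mul,
        ← AddChar.map_add_eq_mul]
      congr 1
      simp only [add_dotProduct, dotProduct_add]
      ring
    · rw [if_neg h, if_neg (by rwa [← add_assoc]), mul_zero, smul_zero]
  · intro l _ hl
    rw [XZ_apply, if_neg hl, zero_mul]
  · simp

theorem XZ_eq_of_smul_eq {n : ℕ} {c c' : ℂ} {x z x' z' : Fin n → ZMod D} (hc : c ≠ 0)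
    (h : c • XZ D n x z = c' • XZ D n x' z') : x = x' ∧ z = z' := by
  have hentry : ∀ j k, c * XZ D n x z j k = c' * XZ D n x' z' j k := fun j k => by
    simpa using congr_fun₂ h j k
  have hx : x = x' := by
    by_contra hne
    have h0 := hentry 0 x
    rw [XZ_apply, XZ_apply, if_pos (zero_add x).symm, if_neg (by rwa [zero_add]), mul_zero] at h0
    exact mul_ne_zero hc (AddChar.val_isUnit _ _).ne_zero h0
  subst hx
  have hphase : ∀ k, c * ZMod.stdAddChar (k ⬝ᵥ z) = c' * ZMod.stdAddChar (k ⬝ᵥ z') :=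
    fun k => by simpa [XZ_apply] using hentry (k - x) k
  have hcc : c = c' := by simpa using hphase 0
  subst hcc
  refine ⟨rfl, funext fun i => ?_⟩
  simpa using ZMod.injective_stdAddChar (mul_left_cancel₀ hc (hphase (Pi.single i 1)))

end Pauli

theorem exists_injective_monoidHom_of_isPauli {D n : ℕ} [NeZero D]
    (S : Subgroup (Matrix (Fin n → ZMod D) (Fin n → ZMod D) ℂ)ˣ)
    (hS : ∀ s ∈ S, IsPauli D n (s : Matrix (Fin n → ZMod D) (Fin n → ZMod D) ℂ))
    {ψ : (Fin n → ZMod D) → ℂ} (hψ : ψ ≠ 0)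
    (hfix : ∀ s ∈ S, (s : Matrix (Fin n → ZMod D) (Fin n → ZMod D) ℂ) *ᵥ ψ = ψ) :
    ∃ f : S →* Multiplicative (Fin n ⊕ Fin n → ZMod D), Function.Injective f := by
  choose lam x z hs using fun s : S => hS s s.2
  simp only [omegaD_pow_val] at hs
  have hmul : ∀ s t : S, x (s * t) = x s + x t ∧ z (s * t) = z s + z t := fun s t => by
    refine XZ_eq_of_smul_eq (c' := ZMod.stdAddChar (lam s) * ZMod.stdAddChar (lam t) *
      ZMod.stdAddChar (-(x t ⬝ᵥ z s))) (ZMod.stdAddChar.val_isUnit (lam (s * t))).ne_zero ?_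
    rw [← hs, Subgroup.coe_mul, Units.val_mul, hs, hs, smul_mul_smul, XZ_mul, smul_smul]
  refine ⟨MonoidHom.mk' (fun s => Multiplicative.ofAdd (Sum.elim (x s) (z s))) fun s t => ?_,
    fun s t hst => ?_⟩
  · rw [(hmul s t).1, (hmul s t).2, Sum.elim_add_add]
    rfl
  · obtain ⟨hx, hz⟩ := Sum.elim_eq_iff.mp hst
    have hft := hfix t t.2
    rw [hs, ← hx, ← hz] at hft
    have hfs := hfix s s.2
    rw [hs] at hfs
    refine Subtype.ext (Units.ext ?_)
    rw [hs, hs, ← hx, ← hz, smul_eq_smul_of_smul_mulVec_eq hψ hfs hft]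

theorem stmt_17_general (D n : ℕ) [NeZero D]
    (S : Subgroup (Matrix (Fin n → ZMod D) (Fin n → ZMod D) ℂ)ˣ)
    (hS : ∀ s ∈ S, IsPauli D n (s : Matrix (Fin n → ZMod D) (Fin n → ZMod D) ℂ))
    (ψ : (Fin n → ZMod D) → ℂ) (hψ : ψ ≠ 0)
    (hfix : ∀ s ∈ S, (s : Matrix (Fin n → ZMod D) (Fin n → ZMod D) ℂ) *ᵥ ψ = ψ) :
    ∃ g : Fin (2 * n) → (Matrix (Fin n → ZMod D) (Fin n → ZMod D) ℂ)ˣ,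
      Subgroup.closure (Set.range g) = S := by
  obtain ⟨f, hf⟩ := exists_injective_monoidHom_of_isPauli S hS hψ hfix
  obtain ⟨g, hg⟩ :=
    Subgroup.exists_closure_range_eq_of_injective hf (ZMod.exists_closure_range_eq D)
  let e : Fin (2 * n) ≃ Fin n ⊕ Fin n := (finCongr (two_mul n)).trans finSumFinEquiv.symm
  exact ⟨g ∘ e, by rw [e.surjective.range_comp, hg]⟩

/-- A stabilizer (subgroup of the n-qudit Pauli group with a nonzero common fixed
vector) can be generated by at most 2n elements. -/
theorem stmt_17 (D n : ℕ) [NeZero D] (hD : 2 ≤ D) (hn : 1 ≤ n)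
    (S : Subgroup (Matrix (Fin n → ZMod D) (Fin n → ZMod D) ℂ)ˣ)
    (hS : ∀ s ∈ S, IsPauli D n (s : Matrix (Fin n → ZMod D) (Fin n → ZMod D) ℂ))
    (ψ : (Fin n → ZMod D) → ℂ) (hψ : ψ ≠ 0)
    (hfix : ∀ s ∈ S, (s : Matrix (Fin n → ZMod D) (Fin n → ZMod D) ℂ) *ᵥ ψ = ψ) :
    ∃ g : Fin (2 * n) → (Matrix (Fin n → ZMod D) (Fin n → ZMod D) ℂ)ˣ,
      Subgroup.closure (Set.range g) = S :=
  stmt_17_general D n S hS ψ hψ hfix
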